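/- arXiv:2107.00361 — 4 statements merged into one kernel-verified Lean document; each statement's English description precedes it below -/
import Mathlib

section
/- For any (K,F,Z,S) PDA, S ≥ K(F−Z)/(Z+1); equivalently, the transmission load R = S/F of the associated coded caching scheme satisfies R ≥ K(1−Z/F)/(Z+1). -/
/-- A `(K, F, Z, S)` placement delivery array: an `F × K` array whose entries are
either `none` (the star `⋆`) or `some s` with `s < S`, satisfying conditions C1–C3. -/
def IsPDA (K F Z S : ℕ) (P : Fin F → Fin K → Option ℕ) : Prop :=
  (∀ (j : Fin F) (k : Fin K) (s : ℕ), P j k = some s → s < S) ∧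
  (∀ k : Fin K, (Finset.univ.filter (fun j => P j k = none)).card = Z) ∧
  (∀ s < S, ∃ (j : Fin F) (k : Fin K), P j k = some s) ∧
  (∀ (j₁ j₂ : Fin F) (k₁ k₂ : Fin K) (s : ℕ), (j₁, k₁) ≠ (j₂, k₂) →
    P j₁ k₁ = some s → P j₂ k₂ = some s →
    j₁ ≠ j₂ ∧ k₁ ≠ k₂ ∧ P j₁ k₂ = none ∧ P j₂ k₁ = none)

/-- For any `(K,F,Z,S)` PDA, `S ≥ K(F−Z)/(Z+1)`; equivalently the load
`R = S/F` satisfies `R ≥ K(1 − Z/F)/(Z+1)`. -/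
theorem pda_load_lower_bound (K F Z S : ℕ) (hF : 0 < F)
    (P : Fin F → Fin K → Option ℕ) (hP : IsPDA K F Z S P) :
    K * (F - Z) ≤ (Z + 1) * S ∧
    (K : ℚ) * (1 - (Z : ℚ) / F) / ((Z : ℚ) + 1) ≤ (S : ℚ) / F := by
  obtain ⟨hC1, hC2, hC3, hC4⟩ := hP
  -- the set of integer cells
  set T : Finset (Fin F × Fin K) :=
    Finset.univ.filter (fun p => P p.1 p.2 ≠ none) with hT
  set A : ℕ → Finset (Fin F × Fin K) :=
    fun s => Finset.univ.filter (fun p => P p.1 p.2 = some s) with hA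
  -- each value occurs at most Z+1 times
  have hocc : ∀ s, (A s).card ≤ Z + 1 := by
    intro s
    rcases (A s).eq_empty_or_nonempty with he | ⟨⟨j, k⟩, hjk⟩
    · simp [he]
    · have hjk' : P j k = some s := by
        simpa [hA] using hjk
      have hsub : ((A s).erase (j, k)).card ≤
          (Finset.univ.filter (fun j' => P j' k = none)).card := by
        apply Finset.card_le_card_of_injOn (fun p => p.1)
        · intro p hp
          have hne : p ≠ (j, k) := Finset.ne_of_mem_erase hp
          have hps : P p.1 p.2 = some s := by
            have := Finset.mem_of_mem_erase hp
            simpa [hA] using this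
          have h4 := hC4 p.1 j p.2 k s (by simpa using hne) hps hjk'
          simp [h4.2.2.1]
        · intro p hp q hq hpq
          by_contra hne
          have hps : P p.1 p.2 = some s := by
            have := Finset.mem_of_mem_erase hp
            simpa [hA] using this
          have hqs : P q.1 q.2 = some s := by
            have := Finset.mem_of_mem_erase hq
            simpa [hA] using this
          have hne' : (p.1, p.2) ≠ (q.1, q.2) := by
            simpa using hne
          exact (hC4 p.1 q.1 p.2 q.2 s hne' hps hqs).1 hpq
      have := Finset.card_erase_of_mem hjk
      have hpos : 1 ≤ (A s).card := Finset.card_pos.mpr ⟨(j, k), hjk⟩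
      rw [hC2 k] at hsub
      omega
  -- T is the disjoint union of the A s over s < S
  have hTbu : T = (Finset.range S).biUnion A := by
    ext p
    simp only [hT, hA, Finset.mem_biUnion, Finset.mem_filter, Finset.mem_univ,
      true_and, Finset.mem_range]
    constructor
    · intro h
      rcases hx : P p.1 p.2 with _ | s
      · exact absurd hx h
      · exact ⟨s, hC1 p.1 p.2 s hx, rfl⟩
    · rintro ⟨s, _, hs⟩
      simp [hs]
  have hTcard_le : T.card ≤ S * (Z + 1) := by
    rw [hTbu]
    calc ((Finset.range S).biUnion A).card ≤ ∑ s ∈ Finset.range S, (A s).card :=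
          Finset.card_biUnion_le
      _ ≤ ∑ _s ∈ Finset.range S, (Z + 1) := Finset.sum_le_sum fun s _ => hocc s
      _ = S * (Z + 1) := by simp [Finset.sum_const, Finset.card_range]
  -- T has K * (F - Z) elements
  have hTcard : T.card = K * (F - Z) := by
    rw [Finset.card_eq_sum_card_fiberwise (f := fun p => p.2)
      (t := Finset.univ) (fun p _ => Finset.mem_univ _)]
    have hcol : ∀ k : Fin K, (T.filter (fun p => p.2 = k)).card = F - Z := by
      intro k
      have hb : (T.filter (fun p => p.2 = k)).card =
          (Finset.univ.filter (fun j : Fin F => P j k ≠ none)).card := by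
        apply Finset.card_bij (fun p _ => p.1)
        · intro p hp
          simp only [hT, Finset.mem_filter, Finset.mem_univ, true_and] at hp ⊢
          rw [← hp.2]; exact hp.1
        · intro p hp q hq h
          simp only [hT, Finset.mem_filter] at hp hq
          exact Prod.ext h (hp.2.trans hq.2.symm)
        · intro j hj
          simp only [Finset.mem_filter, Finset.mem_univ, true_and] at hj
          exact ⟨(j, k), by simp [hT, hj], rfl⟩
      rw [hb]
      have := hC2 k
      have h2 : (Finset.univ.filter (fun j : Fin F => P j k = none)).card
          + (Finset.univ.filter (fun j : Fin F => ¬ P j k = none)).card = F := by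
        rw [Finset.card_filter_add_card_filter_not]; simp
      have h3 : (Finset.univ.filter (fun j : Fin F => P j k ≠ none)).card =
          (Finset.univ.filter (fun j : Fin F => ¬ P j k = none)).card := by
        simp only [ne_eq]
      rw [h3]
      omega
    rw [Finset.sum_congr rfl (fun k _ => hcol k)]
    simp [mul_comm]
  have hmain : K * (F - Z) ≤ (Z + 1) * S := by
    rw [← hTcard]; rw [mul_comm] at hTcard_le; exact hTcard_le
  refine ⟨hmain, ?_⟩
  have hFQ : (0 : ℚ) < F := by exact_mod_cast hF
  have hZQ : (0 : ℚ) < (Z : ℚ) + 1 := by positivity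
  rw [div_le_div_iff₀ hZQ hFQ]
  by_cases hZF : Z ≤ F
  · have hcast : (K : ℚ) * ((F : ℚ) - Z) ≤ ((Z : ℚ) + 1) * S := by
      have := hmain
      have : ((K * (F - Z) : ℕ) : ℚ) ≤ (((Z + 1) * S : ℕ) : ℚ) := by exact_mod_cast this
      rwa [Nat.cast_mul, Nat.cast_sub hZF, Nat.cast_mul, Nat.cast_add, Nat.cast_one] at this
    have h1 : (K : ℚ) * (1 - (Z : ℚ) / F) * F = (K : ℚ) * ((F : ℚ) - Z) := by
      field_simp
    rw [h1]
    nlinarith [hcast]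
  · have hq : (1 : ℚ) ≤ (Z : ℚ) / F := by
      rw [le_div_iff₀ hFQ]
      have : (F : ℚ) ≤ Z := by exact_mod_cast le_of_lt (not_le.mp hZF)
      linarith
    have hK : (0 : ℚ) ≤ K := by positivity
    have hle : (1 : ℚ) - (Z : ℚ) / F ≤ 0 := by linarith
    have h1 : (K : ℚ) * (1 - (Z : ℚ) / F) ≤ 0 := mul_nonpos_of_nonneg_of_nonpos hK hle
    have h2 : (K : ℚ) * (1 - (Z : ℚ) / F) * F ≤ 0 :=
      mul_nonpos_of_nonpos_of_nonneg h1 (le_of_lt hFQ)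
    have h3 : (0 : ℚ) ≤ (S : ℚ) * ((Z : ℚ) + 1) := by positivity
    linarith
end

section
/- In the MN PDA with parameters K and t (0 ≤ t < K), each integer s appears exactly t+1 times in the array; i.e., the MN PDA is (t+1)-regular. -/
/-- A `(Z, S)` placement delivery array with rows indexed by a finite type `ρ` and
columns indexed by a finite type `κ`: entries are either `none` (the star `⋆`) or
`some s` with `s < S`, satisfying conditions C1–C3 of a PDA. -/
def IsPDAOn {ρ κ : Type*} [Fintype ρ] [Fintype κ] (Z S : ℕ)
    (P : ρ → κ → Option ℕ) : Prop :=
  (∀ (j : ρ) (k : κ) (s : ℕ), P j k = some s → s < S) ∧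
  (∀ k : κ, (Finset.univ.filter (fun j => P j k = none)).card = Z) ∧
  (∀ s < S, ∃ (j : ρ) (k : κ), P j k = some s) ∧
  (∀ (j₁ j₂ : ρ) (k₁ k₂ : κ) (s : ℕ), (j₁, k₁) ≠ (j₂, k₂) →
    P j₁ k₁ = some s → P j₂ k₂ = some s →
    j₁ ≠ j₂ ∧ k₁ ≠ k₂ ∧ P j₁ k₂ = none ∧ P j₂ k₁ = none)

/-- In the MN PDA with parameters `K` and `t` (`0 ≤ t < K`), each integer
`s ∈ {0,…,C(K,t+1)−1}` appears exactly `t+1` times: the MN PDA is `(t+1)`-regular. -/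
theorem mn_pda_regular (K t : ℕ) (ht : t < K)
    (f : Finset (Fin K) → ℕ)
    (hf_lt : ∀ U : Finset (Fin K), U.card = t + 1 → f U < Nat.choose K (t + 1))
    (hf_inj : ∀ U V : Finset (Fin K), U.card = t + 1 → V.card = t + 1 → f U = f V → U = V)
    (hf_surj : ∀ s < Nat.choose K (t + 1), ∃ U : Finset (Fin K), U.card = t + 1 ∧ f U = s)
    (P : {T : Finset (Fin K) // T.card = t} → Fin K → Option ℕ)
    (hP : ∀ (T : {T : Finset (Fin K) // T.card = t}) (k : Fin K),
      P T k = if k ∈ T.1 then none else some (f (insert k T.1)))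
    (s : ℕ) (hs : s < Nat.choose K (t + 1)) :
    (Finset.univ.filter
      (fun p : {T : Finset (Fin K) // T.card = t} × Fin K => P p.1 p.2 = some s)).card
      = t + 1 := by
  obtain ⟨U, hUcard, hUf⟩ := hf_surj s hs
  have key : ∀ p : {T : Finset (Fin K) // T.card = t} × Fin K,
      P p.1 p.2 = some s ↔ (p.2 ∈ U ∧ p.1.1 = U.erase p.2) := by
    rintro ⟨T, k⟩
    rw [hP]
    constructor
    · intro h
      have hk : k ∉ T.1 := by
        intro hk; simp [hk] at h
      rw [if_neg hk] at h
      have hfe : f (insert k T.1) = s := Option.some.inj h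
      have hins : (insert k T.1).card = t + 1 := by
        rw [Finset.card_insert_of_notMem hk, T.2]
      have hUeq : insert k T.1 = U := hf_inj _ _ hins hUcard (hfe.trans hUf.symm)
      refine ⟨hUeq ▸ Finset.mem_insert_self k T.1, ?_⟩
      rw [← hUeq, Finset.erase_insert hk]
    · rintro ⟨hkU, hT⟩
      have hk : k ∉ T.1 := by rw [hT]; exact Finset.notMem_erase k U
      rw [if_neg hk, hT, Finset.insert_erase hkU, hUf]
  rw [← hUcard]
  refine Finset.card_bij' (fun p _ => p.2)
    (fun k hk => (⟨⟨U.erase k, by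
      rw [Finset.card_erase_of_mem hk, hUcard]; rfl⟩, k⟩ :
      {T : Finset (Fin K) // T.card = t} × Fin K)) ?_ ?_ ?_ ?_
  · intro p hp
    simp only [Finset.mem_filter] at hp
    exact ((key p).mp hp.2).1
  · intro k hk
    simp only [Finset.mem_filter, Finset.mem_univ, true_and]
    exact (key ⟨⟨U.erase k, by
      rw [Finset.card_erase_of_mem hk, hUcard]; rfl⟩, k⟩).mpr ⟨hk, rfl⟩
  · intro p hp
    simp only [Finset.mem_filter] at hp
    obtain ⟨h1, h2⟩ := (key p).mp hp.2
    exact Prod.ext (Subtype.ext h2.symm) rfl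
  · intro k hk
    rfl
end

section
/- For the generalized PDA G obtained by replicating column λ of a (Λ,F,Z,S) PDA P exactly L_λ times, the number of distinct labeled integers s^{(i)} appearing in G equals Σ_{s=0}^{S−1} max{ L_λ : λ such that s appears in column λ of P }. Hence the delivery load of the shared-cache scheme is R = (1/F)·Σ_{s=0}^{S−1} max{L_λ : s appears in column λ of P}. -/
/-! The labeled integer `s^(t)` occurs in `G` iff some column of `P` containing `s` has at
least `t ≥ 1` copies, i.e. iff `1 ≤ t ≤ M s` with `M s` the largest multiplicity of a column
containing `s` (an empty maximum being `0`). So the labels with integer `s` are exactly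
`s^(1), …, s^(M s)`, and since every integer of a PDA is `< S`, summing over `s < S` counts
them all. -/

open Finset

theorem card_eq_sum_of_mem_iff_mem_Icc {α : Type*} [DecidableEq α] {A : Finset (α × ℕ)}
    {T : Finset α} {f : α → ℕ} (hA : ∀ a t, (a, t) ∈ A ↔ a ∈ T ∧ t ∈ Icc 1 (f a)) :
    #A = ∑ a ∈ T, f a := by
  have hA_eq : A = (T.sigma fun a => Icc 1 (f a)).map (Equiv.sigmaEquivProd α ℕ).toEmbedding := by
    ext ⟨a, t⟩
    simp [hA]
  simp [hA_eq]

section Replication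

variable {ι κ α : Type*} [Fintype ι] [Fintype κ] [DecidableEq α]

/-- Copy `i : Fin (L k)` of column `k` carries the superscript `i + 1`. -/
def replicateColumns (P : ι → κ → Option α) (L : κ → ℕ) :
    ι → (Σ k, Fin (L k)) → Option (α × ℕ) :=
  fun j c => (P j c.1).map fun s => (s, (c.2 : ℕ) + 1)

def labelSet {γ β : Type*} [Fintype γ] [DecidableEq β] (G : ι → γ → Option β) : Finset β :=
  (univ : Finset (ι × γ)).biUnion fun p => (G p.1 p.2).toFinset

def maxMultiplicity (P : ι → κ → Option α) (L : κ → ℕ) (s : α) : ℕ :=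
  (univ.filter fun k => ∃ j, P j k = some s).sup L

theorem le_maxMultiplicity_iff {P : ι → κ → Option α} {L : κ → ℕ} {s : α} {t : ℕ}
    (ht : 0 < t) :
    t ≤ maxMultiplicity P L s ↔ ∃ j k, P j k = some s ∧ t ≤ L k := by
  rw [maxMultiplicity, Finset.le_sup_iff ht]
  simp only [mem_filter, mem_univ, true_and]
  exact ⟨fun ⟨k, ⟨j, hj⟩, hk⟩ => ⟨j, k, hj, hk⟩, fun ⟨j, k, hj, hk⟩ => ⟨k, ⟨j, hj⟩, hk⟩⟩

theorem mem_labelSet_replicateColumns {P : ι → κ → Option α} {L : κ → ℕ} {s : α} {t : ℕ} :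
    (s, t) ∈ labelSet (replicateColumns P L) ↔ t ∈ Icc 1 (maxMultiplicity P L s) := by
  rw [mem_Icc]
  simp only [labelSet, replicateColumns, mem_biUnion, mem_univ, true_and, Option.mem_toFinset,
    Option.mem_def, Option.map_eq_some_iff, Prod.mk.injEq, Prod.exists, Sigma.exists]
  constructor
  · rintro ⟨j, k, i, s, hs, rfl, rfl⟩
    exact ⟨Nat.succ_pos _, (le_maxMultiplicity_iff (Nat.succ_pos _)).2 ⟨j, k, hs, i.2⟩⟩
  · rintro ⟨ht, hle⟩
    obtain ⟨j, k, hs, htk⟩ := (le_maxMultiplicity_iff ht).1 hle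
    exact ⟨j, k, ⟨t - 1, by omega⟩, s, hs, rfl, Nat.sub_add_cancel ht⟩

theorem card_labelSet_replicateColumns {P : ι → κ → Option α} {L : κ → ℕ} {T : Finset α}
    (hT : ∀ s, 0 < maxMultiplicity P L s → s ∈ T) :
    #(labelSet (replicateColumns P L)) = ∑ s ∈ T, maxMultiplicity P L s := by
  refine card_eq_sum_of_mem_iff_mem_Icc fun s t => ?_
  rw [mem_labelSet_replicateColumns, mem_Icc]
  exact ⟨fun h => ⟨hT s (by omega), h⟩, fun h => h.2⟩

end Replication

theorem IsPDA.lt_of_maxMultiplicity_pos {Λ F Z S : ℕ} {P : Fin F → Fin Λ → Option ℕ}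
    (hP : IsPDA Λ F Z S P) (L : Fin Λ → ℕ) {s : ℕ} (hs : 0 < maxMultiplicity P L s) : s < S := by
  obtain ⟨j, k, hjk, -⟩ := (le_maxMultiplicity_iff hs).1 le_rfl
  exact hP.1 j k s hjk

theorem replicated_gpda_label_count_general (Λ F Z S : ℕ)
    (P : Fin F → Fin Λ → Option ℕ) (hP : IsPDA Λ F Z S P)
    (L : Fin Λ → ℕ)
    (G : Fin F → (Σ lam : Fin Λ, Fin (L lam)) → Option (ℕ × ℕ))
    (hG : ∀ (j : Fin F) (lam : Fin Λ) (i : Fin (L lam)),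
      G j ⟨lam, i⟩ = (P j lam).map (fun s => (s, (i : ℕ) + 1))) :
    ((Finset.univ : Finset (Fin F × Σ lam : Fin Λ, Fin (L lam))).biUnion
        (fun p => (G p.1 p.2).toFinset)).card
      = ∑ s ∈ Finset.range S,
          ((Finset.univ.filter (fun lam : Fin Λ => ∃ j : Fin F, P j lam = some s)).sup L) ∧
    (((Finset.univ : Finset (Fin F × Σ lam : Fin Λ, Fin (L lam))).biUnion
        (fun p => (G p.1 p.2).toFinset)).card : ℚ) / F
      = (∑ s ∈ Finset.range S,
          (((Finset.univ.filter (fun lam : Fin Λ => ∃ j : Fin F, P j lam = some s)).sup L : ℕ) : ℚ)) / F := by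
  obtain rfl : G = replicateColumns P L := funext fun j => funext fun ⟨lam, i⟩ => hG j lam i
  have hcard : #(labelSet (replicateColumns P L)) = ∑ s ∈ range S, maxMultiplicity P L s :=
    card_labelSet_replicateColumns fun s hs => mem_range.2 (hP.lt_of_maxMultiplicity_pos L hs)
  -- The statement decides its filter by `Nat.decidableExistsFin`, which is not defeq to the
  -- `Fintype.decidableExistsFintype` inside `maxMultiplicity`.
  have hM : ∀ s, (univ.filter fun lam : Fin Λ => ∃ j : Fin F, P j lam = some s).sup L
      = maxMultiplicity P L s := fun s => by unfold maxMultiplicity; congr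
  simp only [hM, ← Nat.cast_sum]
  exact ⟨hcard, congrArg (fun n : ℕ => (n : ℚ) / F) hcard⟩

/-- The number of distinct labeled integers `s^{(i)}` appearing in the replicated
array `G` equals `Σ_{s=0}^{S−1} max{L λ : s appears in column λ of P}`; hence the
delivery load of the shared-cache scheme is this quantity divided by `F`. -/
theorem replicated_gpda_label_count (Λ F Z S : ℕ) (hF : 0 < F)
    (P : Fin F → Fin Λ → Option ℕ) (hP : IsPDA Λ F Z S P)
    (L : Fin Λ → ℕ)
    (G : Fin F → (Σ lam : Fin Λ, Fin (L lam)) → Option (ℕ × ℕ))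
    (hG : ∀ (j : Fin F) (lam : Fin Λ) (i : Fin (L lam)),
      G j ⟨lam, i⟩ = (P j lam).map (fun s => (s, (i : ℕ) + 1))) :
    ((Finset.univ : Finset (Fin F × Σ lam : Fin Λ, Fin (L lam))).biUnion
        (fun p => (G p.1 p.2).toFinset)).card
      = ∑ s ∈ Finset.range S,
          ((Finset.univ.filter (fun lam : Fin Λ => ∃ j : Fin F, P j lam = some s)).sup L) ∧
    (((Finset.univ : Finset (Fin F × Σ lam : Fin Λ, Fin (L lam))).biUnion
        (fun p => (G p.1 p.2).toFinset)).card : ℚ) / F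
      = (∑ s ∈ Finset.range S,
          (((Finset.univ.filter (fun lam : Fin Λ => ∃ j : Fin F, P j lam = some s)).sup L : ℕ) : ℚ)) / F :=
  replicated_gpda_label_count_general Λ F Z S P hP L G hG
end

section
/- Let L_0 ≥ L_1 ≥ … ≥ L_{Λ−1} ≥ 0 be a sorted association profile and 0 ≤ t_s < Λ. Then Σ_{U ⊆ {0,…,Λ−1}, |U| = t_s+1} max_{λ∈U} L_λ = Σ_{λ=0}^{Λ−1−t_s} L_λ · C(Λ−1−λ, t_s). In particular the shared-cache delivery load of the MN-PDA-based scheme equals (Σ_{λ=0}^{Λ−1−t_s} L_λ·C(Λ−1−λ,t_s)) / C(Λ,t_s), recovering the PUE load formula. -/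
/-- For a non-increasing profile `L_0 ≥ … ≥ L_{Λ−1} ≥ 0` and `0 ≤ t_s < Λ`,
`Σ_{U ⊆ {0,…,Λ−1}, |U|=t_s+1} max_{λ∈U} L_λ = Σ_λ L_λ·C(Λ−1−λ, t_s)`
(the binomial coefficient vanishes for `λ > Λ−1−t_s`).  In particular the
shared-cache delivery load of the MN-PDA-based scheme equals
`(Σ_λ L_λ·C(Λ−1−λ,t_s))/C(Λ,t_s)`, recovering the PUE load formula. -/
theorem sorted_profile_subset_max_sum (Λ ts : ℕ) (hts : ts < Λ)
    (L : Fin Λ → ℕ) (hLsorted : ∀ a b : Fin Λ, a ≤ b → L b ≤ L a) :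
    (∑ U ∈ Finset.powersetCard (ts + 1) (Finset.univ : Finset (Fin Λ)), U.sup L)
      = ∑ lam : Fin Λ, L lam * Nat.choose (Λ - 1 - (lam : ℕ)) ts ∧
    ((∑ U ∈ Finset.powersetCard (ts + 1) (Finset.univ : Finset (Fin Λ)),
        ((U.sup L : ℕ) : ℚ)) / (Nat.choose Λ ts : ℚ)
      = (∑ lam : Fin Λ, ((L lam : ℚ) * (Nat.choose (Λ - 1 - (lam : ℕ)) ts : ℚ)))
          / (Nat.choose Λ ts : ℚ)) := by
  have key : (∑ U ∈ Finset.powersetCard (ts + 1) (Finset.univ : Finset (Fin Λ)), U.sup L)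
      = ∑ lam : Fin Λ, L lam * Nat.choose (Λ - 1 - (lam : ℕ)) ts := by
    have hRHS : ∀ lam : Fin Λ, L lam * Nat.choose (Λ - 1 - (lam : ℕ)) ts
        = ∑ _S ∈ Finset.powersetCard ts (Finset.Ioi lam), L lam := by
      intro lam
      rw [Finset.sum_const, smul_eq_mul, Finset.card_powersetCard, Fin.card_Ioi,
        Nat.mul_comm]
    simp_rw [hRHS]
    rw [Finset.sum_sigma']
    refine (Finset.sum_bij (fun p _ => insert p.1 p.2) ?_ ?_ ?_ ?_).symm
    · rintro ⟨lam, S⟩ hp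
      simp only [Finset.mem_sigma, Finset.mem_powersetCard] at hp
      obtain ⟨-, hS, hcard⟩ := hp
      simp only [Finset.mem_powersetCard]
      exact ⟨Finset.subset_univ _, by
        rw [Finset.card_insert_of_notMem (fun h => absurd (hS h) (by simp)), hcard]⟩
    · rintro ⟨lam, S⟩ hp ⟨lam', S'⟩ hp' h
      replace h : insert lam S = insert lam' S' := h
      simp only [Finset.mem_sigma, Finset.mem_powersetCard] at hp hp'
      obtain ⟨-, hS, -⟩ := hp
      obtain ⟨-, hS', -⟩ := hp'
      have hl : lam = lam' := by
        have h1 : lam' ≤ lam := by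
          have : lam ∈ insert lam' S' := h ▸ Finset.mem_insert_self lam S
          rcases Finset.mem_insert.1 this with h2 | h2
          · exact h2.ge
          · exact (Finset.mem_Ioi.1 (hS' h2)).le
        have h2 : lam ≤ lam' := by
          have : lam' ∈ insert lam S := h.symm ▸ Finset.mem_insert_self lam' S'
          rcases Finset.mem_insert.1 this with h2 | h2
          · exact h2.ge
          · exact (Finset.mem_Ioi.1 (hS h2)).le
        exact le_antisymm h2 h1
      subst hl
      have hnot : lam ∉ S := fun hm => absurd (hS hm) (by simp)
      have hnot' : lam ∉ S' := fun hm => absurd (hS' hm) (by simp)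
      have hSS : S = S' := by
        have := congrArg (Finset.erase · lam) h
        simpa [Finset.erase_insert hnot, Finset.erase_insert hnot'] using this
      simp [hSS]
    · intro U hU
      simp only [Finset.mem_powersetCard] at hU
      have hne : U.Nonempty := by rw [← Finset.card_pos, hU.2]; omega
      set m := U.min' hne with hm
      have hmU : m ∈ U := U.min'_mem hne
      have herase : U.erase m ⊆ Finset.Ioi m := by
        intro x hx
        rw [Finset.mem_erase] at hx
        exact Finset.mem_Ioi.2 (lt_of_le_of_ne (U.min'_le x hx.2) (Ne.symm hx.1))
      refine ⟨⟨m, U.erase m⟩, Finset.mem_sigma.2 ⟨Finset.mem_univ _,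
        Finset.mem_powersetCard.2 ⟨herase, ?_⟩⟩, ?_⟩
      · rw [Finset.card_erase_of_mem hmU, hU.2]; omega
      · simp [Finset.insert_erase hmU]
    · rintro ⟨lam, S⟩ hp
      simp only [Finset.mem_sigma, Finset.mem_powersetCard] at hp
      obtain ⟨-, hS, -⟩ := hp
      rw [Finset.sup_insert]
      exact (sup_eq_left.2 (Finset.sup_le fun b hb =>
        hLsorted _ _ (Finset.mem_Ioi.1 (hS hb)).le)).symm
  refine ⟨key, ?_⟩
  have h2 := congrArg (fun n : ℕ => (n : ℚ)) key
  push_cast at h2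
  rw [h2]
end
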